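/- Let A, B, C be finite relational structures, S^{AB} ⊆ Hom_k(A,B), S^{BC} ⊆ Hom_k(B,C), each nonempty, downward-closed, satisfying the forth property, and such that every element is Z-extendable in the respective set. Let p₀ = s₀ ∘ t₀ with t₀ ∈ S^{AB} on domain a₀ and s₀ ∈ S^{BC} on domain t₀(a₀). Given global Z-linear sections (r^{t₀}_a)_{a ∈ A^{≤k}} extending t₀ and (r^{s₀}_b)_{b ∈ B^{≤k}} extending s₀, with coefficients z_t and w_s respectively, the family defined by r^{p₀}_a = Σ_{t ∈ S^{AB}_a} Σ_{s ∈ S^{BC}_{t(a)}} z_t w_s (s ∘ t) is a global Z-linear section of S^{AC} = {s ∘ t : t ∈ S^{AB}, s ∈ S^{BC}} extending p₀. -/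
import Mathlib


open scoped Classical

/-- A (relational) signature: a type of relation symbols with arities. -/
structure Sig where
  symb : Type
  ar : symb → ℕ

/-- A relational structure over a signature `σ`. -/
structure Str (σ : Sig) where
  carrier : Type
  rel : ∀ r : σ.symb, (Fin (σ.ar r) → carrier) → Prop

/-- A (total) homomorphism of relational structures. -/
def IsHom {σ : Sig} (A B : Str σ) (h : A.carrier → B.carrier) : Prop :=
  ∀ r t, A.rel r t → B.rel r (fun i => h (t i))

/-- An isomorphism of relational structures: a bijection preserving and reflecting relations. -/
def IsIso {σ : Sig} (A B : Str σ) (h : A.carrier → B.carrier) : Prop :=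
  Function.Bijective h ∧ ∀ r t, A.rel r t ↔ B.rel r (fun i => h (t i))

/-- Domain of a partial function (coded as an `Option`-valued function). -/
def pdom {α β : Type*} (s : α → Option β) : Set α := {a | s a ≠ none}

/-- Image of a partial function. -/
def pim {α β : Type*} (s : α → Option β) : Set β := {b | ∃ a, s a = some b}

/-- Restriction of a partial function to a set. -/
noncomputable def restrictP {α β : Type*} (s : α → Option β) (U : Set α) : α → Option β :=
  fun a => if a ∈ U then s a else none

/-- A total function viewed as a partial function. -/
def total {α β : Type*} (h : α → β) : α → Option β := fun a => some (h a)

/-- A partial homomorphism: preserves related tuples lying in its domain. -/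
def IsPHom {σ : Sig} (A B : Str σ) (s : A.carrier → Option B.carrier) : Prop :=
  ∀ r (t : Fin (σ.ar r) → A.carrier) (t' : Fin (σ.ar r) → B.carrier),
    A.rel r t → (∀ i, s (t i) = some (t' i)) → B.rel r t'

/-- A partial isomorphism: an injective partial homomorphism reflecting relations. -/
def IsPIso {σ : Sig} (A B : Str σ) (s : A.carrier → Option B.carrier) : Prop :=
  IsPHom A B s ∧
  (∀ a a' b, s a = some b → s a' = some b → a = a') ∧
  (∀ r (t : Fin (σ.ar r) → A.carrier) (t' : Fin (σ.ar r) → B.carrier),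
    B.rel r t' → (∀ i, s (t i) = some (t' i)) → A.rel r t)

/-- `Hom_k(A,B)`: partial homomorphisms with domain of size at most `k`. -/
def Homk {σ : Sig} (k : ℕ) (A B : Str σ) : Set (A.carrier → Option B.carrier) :=
  {s | IsPHom A B s ∧ (pdom s).Finite ∧ (pdom s).ncard ≤ k}

/-- `Isom_k(A,B)`: partial isomorphisms with domain of size at most `k`. -/
def Isomk {σ : Sig} (k : ℕ) (A B : Str σ) : Set (A.carrier → Option B.carrier) :=
  {s | IsPIso A B s ∧ (pdom s).Finite ∧ (pdom s).ncard ≤ k}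

/-- `s ∪ {(a,b)}`: extend a partial function by one value. -/
noncomputable def extend {α β : Type*} (s : α → Option β) (a : α) (b : β) : α → Option β :=
  fun x => if x = a then some b else s x

/-- Downward closure: closed under restriction. -/
def DownClosed {α β : Type*} (S : Set (α → Option β)) : Prop :=
  ∀ s ∈ S, ∀ U, restrictP s U ∈ S

/-- `Forth S s`: for all `a` there is `b` with `s ∪ {(a,b)} ∈ S`. -/
def Forth {α β : Type*} (S : Set (α → Option β)) (s : α → Option β) : Prop :=
  ∀ a, ∃ b, extend s a b ∈ S

/-- The forth property for all members with domain of size `< k`. -/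
def HasForth {α β : Type*} (k : ℕ) (S : Set (α → Option β)) : Prop :=
  ∀ s ∈ S, (pdom s).ncard < k → Forth S s

/-- Bijective forth: there is a bijection `b` with `s ∪ {(a, b a)} ∈ S` for all `a`. -/
def BijForth {α β : Type*} (S : Set (α → Option β)) (s : α → Option β) : Prop :=
  ∃ b : α → β, Function.Bijective b ∧ ∀ a, extend s a (b a) ∈ S

/-- The bijective forth property for all members with domain of size `< k`. -/
def HasBijForth {α β : Type*} (k : ℕ) (S : Set (α → Option β)) : Prop :=
  ∀ s ∈ S, (pdom s).ncard < k → BijForth S s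

/-- Restriction of a formal ℤ-linear combination of partial functions, collecting like terms. -/
noncomputable def restrictZ {α β : Type*} (U : Set α) (r : (α → Option β) →₀ ℤ) :
    (α → Option β) →₀ ℤ :=
  Finsupp.mapDomain (fun s => restrictP s U) r

/-- A global ℤ-linear section of `S` over the contexts of size at most `k`. -/
def IsZSection {α β : Type*} (k : ℕ) (S : Set (α → Option β))
    (r : Set α → ((α → Option β) →₀ ℤ)) : Prop :=
  (∀ U : Set α, U.Finite → U.ncard ≤ k → ∀ t ∈ (r U).support, t ∈ S ∧ pdom t = U) ∧
  (∀ U U' : Set α, U.Finite → U.ncard ≤ k → U'.Finite → U'.ncard ≤ k →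
    restrictZ (U ∩ U') (r U) = restrictZ (U ∩ U') (r U'))

/-- `s` is ℤ-extendable in `S`: some global ℤ-linear section restricts to `s` at its domain. -/
def ZExt {α β : Type*} (k : ℕ) (S : Set (α → Option β)) (s : α → Option β) : Prop :=
  ∃ r, IsZSection k S r ∧ r (pdom s) = Finsupp.single s 1

/-- The set of restrictions of a total function `h` to subsets of size at most `k`. -/
def Sres {α β : Type*} (h : α → β) (k : ℕ) : Set (α → Option β) :=
  {s | ∃ U : Set α, U.Finite ∧ U.ncard ≤ k ∧ s = restrictP (total h) U}

/-- `A →_k B`: k-consistency (existence of a nonempty downward-closed forth set). -/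
def karrow {σ : Sig} (k : ℕ) (A B : Str σ) : Prop :=
  ∃ S : Set (A.carrier → Option B.carrier),
    S.Nonempty ∧ S ⊆ Homk k A B ∧ DownClosed S ∧ HasForth k S

/-- `A →ᶻ_k B`: cohomological k-consistency. -/
def cohomConsistent {σ : Sig} (k : ℕ) (A B : Str σ) : Prop :=
  ∃ S : Set (A.carrier → Option B.carrier), S.Nonempty ∧ S ⊆ Homk k A B ∧
    DownClosed S ∧ HasForth k S ∧ ∀ s ∈ S, ZExt k S s

/-- Composition of partial functions. -/
def pcomp {α β γ : Type*} (s : β → Option γ) (t : α → Option β) : α → Option γ :=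
  fun a => (t a).bind s


section Aux
variable {α β γ : Type*}

lemma restrictP_eq_self {t : α → Option β} {V : Set α} (h : pdom t ⊆ V) :
    restrictP t V = t := by
  funext a
  by_cases ha : a ∈ V
  · simp [restrictP, ha]
  · simp only [restrictP, if_neg ha]
    by_contra hne
    exact ha (h (by simp [pdom]; exact fun h' => hne h'.symm))

lemma pdom_restrictP (t : α → Option β) (V : Set α) : pdom (restrictP t V) = pdom t ∩ V := by
  ext a; by_cases ha : a ∈ V <;> simp [pdom, restrictP, ha]

lemma restrict_pcomp (s : β → Option γ) (t : α → Option β) (V : Set α) :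
    restrictP (pcomp s t) V = pcomp s (restrictP t V) := by
  funext a
  by_cases ha : a ∈ V <;> simp [restrictP, pcomp, ha]

lemma pim_restrict_subset (t : α → Option β) (V : Set α) : pim (restrictP t V) ⊆ pim t := by
  rintro b ⟨a, ha⟩
  by_cases hav : a ∈ V
  · exact ⟨a, by simpa [restrictP, hav] using ha⟩
  · simp [restrictP, hav] at ha

lemma pcomp_restrict_pim (s : β → Option γ) (t : α → Option β) :
    pcomp s t = pcomp (restrictP s (pim t)) t := by
  funext a
  cases h : t a with
  | none => simp [pcomp, h]
  | some b =>
    have hb : b ∈ pim t := ⟨a, h⟩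
    simp [pcomp, h, restrictP, hb]

lemma pdom_pcomp {s : β → Option γ} {t : α → Option β} (h : pim t ⊆ pdom s) :
    pdom (pcomp s t) = pdom t := by
  ext a
  cases ht : t a with
  | none => simp [pdom, pcomp, ht]
  | some b =>
    have : s b ≠ none := h ⟨a, ht⟩
    simp [pdom, pcomp, ht, this]

lemma some_image_pim (t : α → Option β) : some '' pim t = t '' pdom t := by
  ext x; constructor
  · rintro ⟨b, ⟨a, ha⟩, rfl⟩
    exact ⟨a, by simp [pdom, ha], ha⟩
  · rintro ⟨a, ha, rfl⟩
    cases ht : t a with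
    | none => exact absurd ht ha
    | some b => exact ⟨b, ⟨a, ht⟩, rfl⟩

lemma pim_finite {t : α → Option β} (h : (pdom t).Finite) : (pim t).Finite := by
  have h1 : (some '' pim t).Finite := by rw [some_image_pim]; exact h.image t
  have := h1.preimage (Set.injOn_of_injective (Option.some_injective β))
  simpa [Set.preimage_image_eq _ (Option.some_injective β)] using this

lemma pim_ncard_le {t : α → Option β} (h : (pdom t).Finite) :
    (pim t).ncard ≤ (pdom t).ncard := by
  have h1 : (some '' pim t).ncard = (pim t).ncard :=
    Set.ncard_image_of_injective _ (Option.some_injective β)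
  rw [← h1, some_image_pim]
  exact Set.ncard_image_le h

end Aux
/-- Composition of global ℤ-linear sections: the double-sum family is a global
ℤ-linear section of the composite strategy set extending `p₀ = s₀ ∘ t₀`. -/
theorem stmt8 (σ : Sig) (A B C : Str σ)
    [Fintype A.carrier] [Fintype B.carrier] [Fintype C.carrier] (k : ℕ)
    (SAB : Set (A.carrier → Option B.carrier)) (SBC : Set (B.carrier → Option C.carrier))
    (hAB : SAB ⊆ Homk k A B) (hBC : SBC ⊆ Homk k B C)
    (hABne : SAB.Nonempty) (hBCne : SBC.Nonempty)
    (hABd : DownClosed SAB) (hBCd : DownClosed SBC)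
    (hABf : HasForth k SAB) (hBCf : HasForth k SBC)
    (hABz : ∀ t ∈ SAB, ZExt k SAB t) (hBCz : ∀ s ∈ SBC, ZExt k SBC s)
    (t₀ : A.carrier → Option B.carrier) (s₀ : B.carrier → Option C.carrier)
    (ht₀ : t₀ ∈ SAB) (hs₀ : s₀ ∈ SBC) (hdom : pdom s₀ = pim t₀)
    (rt : Set A.carrier → ((A.carrier → Option B.carrier) →₀ ℤ))
    (rs : Set B.carrier → ((B.carrier → Option C.carrier) →₀ ℤ))
    (hrt : IsZSection k SAB rt) (hrs : IsZSection k SBC rs)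
    (hrt0 : rt (pdom t₀) = Finsupp.single t₀ 1)
    (hrs0 : rs (pdom s₀) = Finsupp.single s₀ 1) :
    IsZSection k ({u | ∃ t ∈ SAB, ∃ s ∈ SBC, u = pcomp s t} :
        Set (A.carrier → Option C.carrier))
      (fun U => (rt U).sum fun t zt => (rs (pim t)).sum fun s ws =>
        Finsupp.single (pcomp s t) (zt * ws)) ∧
    ((rt (pdom (pcomp s₀ t₀))).sum fun t zt => (rs (pim t)).sum fun s ws =>
        Finsupp.single (pcomp s t) (zt * ws)) =
      Finsupp.single (pcomp s₀ t₀) 1 := by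
  classical
  obtain ⟨hrs1, hrs2⟩ := hrs
  obtain ⟨hrt1, hrt2⟩ := hrt
  set G : (A.carrier → Option B.carrier) → ((A.carrier → Option C.carrier) →₀ ℤ) :=
    fun t => Finsupp.mapDomain (fun s => pcomp s t) (rs (pim t)) with hG
  -- rewrite the double sum using G
  have hr_eq : ∀ U, ((rt U).sum fun t zt => (rs (pim t)).sum fun s ws =>
      Finsupp.single (pcomp s t) (zt * ws)) = (rt U).sum (fun t zt => zt • G t) := by
    intro U
    refine Finsupp.sum_congr fun t _ => ?_
    simp only [hG, Finsupp.mapDomain, Finsupp.smul_sum, Finsupp.smul_single, smul_eq_mul]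
  -- rs V restricted to V is itself
  have hidB : ∀ (W : Set B.carrier), W.Finite → W.ncard ≤ k → restrictZ W (rs W) = rs W := by
    intro W hf hc
    have h := Finsupp.mapDomain_congr (v := rs W) (g := id)
      (fun s hs => restrictP_eq_self (hrs1 W hf hc s hs).2.subset)
    exact h.trans Finsupp.mapDomain_id
  have hidA : ∀ (V : Set A.carrier), V.Finite → V.ncard ≤ k → restrictZ V (rt V) = rt V := by
    intro V hf hc
    have h := Finsupp.mapDomain_congr (v := rt V) (g := id)
      (fun t ht => restrictP_eq_self (hrt1 V hf hc t ht).2.subset)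
    exact h.trans Finsupp.mapDomain_id
  -- Claim A: restricting G t
  have claimA : ∀ (t : A.carrier → Option B.carrier), (pdom t).Finite → (pdom t).ncard ≤ k →
      ∀ V : Set A.carrier,
      Finsupp.mapDomain (fun s => restrictP s V) (G t) = G (restrictP t V) := by
    intro t hfin hcard V
    have hpimfin : (pim t).Finite := pim_finite hfin
    have hpimcard : (pim t).ncard ≤ k := le_trans (pim_ncard_le hfin) hcard
    have hWsub : pim (restrictP t V) ⊆ pim t := pim_restrict_subset t V
    have hWfin : (pim (restrictP t V)).Finite := hpimfin.subset hWsub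
    have hWcard : (pim (restrictP t V)).ncard ≤ k :=
      le_trans (Set.ncard_le_ncard hWsub hpimfin) hpimcard
    rw [hG]
    rw [← Finsupp.mapDomain_comp]
    have step1 : ((fun s => restrictP s V) ∘ (fun s : B.carrier → Option C.carrier => pcomp s t))
        = (fun s' => pcomp s' (restrictP t V)) ∘
          (fun s => restrictP s (pim (restrictP t V))) := by
      funext s
      simp only [Function.comp_apply]
      rw [restrict_pcomp, pcomp_restrict_pim]
    rw [step1, Finsupp.mapDomain_comp]
    have h2 : Finsupp.mapDomain (fun s => restrictP s (pim (restrictP t V))) (rs (pim t))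
        = rs (pim (restrictP t V)) := by
      have hcompat := hrs2 (pim t) (pim (restrictP t V)) hpimfin hpimcard hWfin hWcard
      rw [Set.inter_eq_self_of_subset_right hWsub] at hcompat
      rw [restrictZ] at hcompat
      rw [hcompat]
      exact hidB _ hWfin hWcard
    rw [h2]
  -- Master lemma
  have master : ∀ U V : Set A.carrier, U.Finite → U.ncard ≤ k → V ⊆ U →
      restrictZ V ((rt U).sum fun t zt => zt • G t) = (rt V).sum (fun t zt => zt • G t) := by
    intro U V hUf hUc hVU
    have hVf := hUf.subset hVU
    have hVc := le_trans (Set.ncard_le_ncard hVU hUf) hUc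
    rw [restrictZ]
    rw [show Finsupp.mapDomain (fun u : A.carrier → Option C.carrier => restrictP u V)
          ((rt U).sum fun t zt => zt • G t)
        = (rt U).sum (fun t zt => Finsupp.mapDomain (fun u => restrictP u V) (zt • G t)) from
      map_finsuppSum (Finsupp.mapDomain.addMonoidHom _) _ _]
    have hterm : ∀ t ∈ (rt U).support, ∀ zt : ℤ,
        Finsupp.mapDomain (fun u : A.carrier → Option C.carrier => restrictP u V) (zt • G t)
        = zt • G (restrictP t V) := by
      intro t ht zt
      have hdt : pdom t = U := (hrt1 U hUf hUc t ht).2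
      rw [Finsupp.mapDomain_smul, claimA t (hdt ▸ hUf) (hdt ▸ hUc) V]
    rw [Finsupp.sum_congr (g2 := fun t zt => zt • G (restrictP t V))
      (fun t ht => hterm t ht (rt U t))]
    have := Finsupp.sum_mapDomain_index (f := fun t => restrictP t V) (s := rt U)
      (h := fun t' (z : ℤ) => z • G t') (fun _ => zero_smul _ _)
      (fun _ m₁ m₂ => add_smul m₁ m₂ _)
    rw [← this]
    have hmap : Finsupp.mapDomain (fun t => restrictP t V) (rt U) = rt V := by
      have hcompat := hrt2 U V hUf hUc hVf hVc
      rw [Set.inter_eq_self_of_subset_right hVU] at hcompat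
      rw [restrictZ] at hcompat
      rw [hcompat]
      exact hidA V hVf hVc
    rw [hmap]
  constructor
  · constructor
    · -- support condition
      intro U hUf hUc u hu
      have hsub := Finsupp.support_sum hu
      rw [Finset.mem_biUnion] at hsub
      obtain ⟨t, ht, hu2⟩ := hsub
      have hsub2 := Finsupp.support_sum hu2
      rw [Finset.mem_biUnion] at hsub2
      obtain ⟨s, hs, hu3⟩ := hsub2
      have := Finsupp.support_single_subset hu3
      rw [Finset.mem_singleton] at this
      subst this
      have htfacts := hrt1 U hUf hUc t ht
      have hpimfin : (pim t).Finite := pim_finite (htfacts.2 ▸ hUf)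
      have hpimcard : (pim t).ncard ≤ k :=
        le_trans (pim_ncard_le (htfacts.2 ▸ hUf)) (htfacts.2 ▸ hUc)
      have hsfacts := hrs1 (pim t) hpimfin hpimcard s hs
      refine ⟨⟨t, htfacts.1, s, hsfacts.1, rfl⟩, ?_⟩
      rw [pdom_pcomp hsfacts.2.symm.subset, htfacts.2]
    · -- compatibility
      intro U U' hUf hUc hU'f hU'c
      simp only [hr_eq]
      rw [master U (U ∩ U') hUf hUc Set.inter_subset_left,
        master U' (U ∩ U') hU'f hU'c Set.inter_subset_right]
  · -- extends p₀
    have hp : pdom (pcomp s₀ t₀) = pdom t₀ := pdom_pcomp hdom.symm.subset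
    rw [hp, hrt0]
    rw [Finsupp.sum_single_index (by simp)]
    rw [← hdom, hrs0]
    rw [Finsupp.sum_single_index (by simp)]
    norm_num
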